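/- arXiv:1701.06610 — 2 statements merged into one kernel-verified Lean document; each statement's English description precedes it below -/
import Mathlib

section
/- Let W : X → P(Y) with X, Y finite, P strictly positive on X, α ∈ (0,1), and suppose D_α(W(x)‖Q) < ∞ for all x (Q strictly positive). Define the tilted distribution W_α^Q(x)(y) := W(x)(y)^α Q(y)^{1−α} / (Σ_{y'} W(x)(y')^α Q(y')^{1−α}) and the operator T_{α,P}(Q) := Σ_x P(x) W_α^Q(x). If Q* is a strictly positive probability mass function on Y achieving min_Q D_α(W‖Q|P), then T_{α,P}(Q*) = Q*; i.e., the Augustin mean is a fixed point of the Augustin operator. -/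
open scoped BigOperators

/-- A probability mass function on a finite type. -/
def IsPMF {Y : Type*} [Fintype Y] (Q : Y → ℝ) : Prop :=
  (∀ y, 0 ≤ Q y) ∧ ∑ y, Q y = 1

/-- The power sum appearing in the Rényi divergence; since `(0:ℝ) ^ (1-α) = 0` for `1-α > 0`,
the sum automatically restricts to `y` with `Q y > 0`. -/
noncomputable def rSum {Y : Type*} [Fintype Y] (α : ℝ) (W Q : Y → ℝ) : ℝ :=
  ∑ y, W y ^ α * Q y ^ (1 - α)

/-- Order-`α` Rényi divergence (for `α ∈ (0,1)`), valued in `EReal`, with the convention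
that it is `⊤` when the power sum vanishes. -/
noncomputable def rDiv {Y : Type*} [Fintype Y] (α : ℝ) (W Q : Y → ℝ) : EReal :=
  if rSum α W Q = 0 then ⊤
  else (((1 / (α - 1)) * Real.log (rSum α W Q) : ℝ) : EReal)

/-- Kullback–Leibler divergence, valued in `EReal`, `⊤` unless `W ≪ Q`. -/
noncomputable def kDiv {Y : Type*} [Fintype Y] (W Q : Y → ℝ) : EReal :=
  if ∀ y, Q y = 0 → W y = 0 then
    (((∑ y, if W y = 0 then 0 else W y * Real.log (W y / Q y)) : ℝ) : EReal)
  else ⊤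

/-- Order-`α` divergence for `α ∈ (0,1]`: Rényi for `α ≠ 1`, KL for `α = 1`. -/
noncomputable def dA {Y : Type*} [Fintype Y] (α : ℝ) (W Q : Y → ℝ) : EReal :=
  if α = 1 then kDiv W Q else rDiv α W Q

/-- Conditional divergence `D_α(W‖Q|P) = ∑_x P(x) D_α(W(x)‖Q)`. -/
noncomputable def cDiv {X Y : Type*} [Fintype X] [Fintype Y]
    (α : ℝ) (W : X → Y → ℝ) (Q : Y → ℝ) (P : X → ℝ) : EReal :=
  ∑ x, (P x : EReal) * dA α (W x) Q

/-- Augustin information `I_α(P;W) = inf_Q D_α(W‖Q|P)`. -/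
noncomputable def aInfo {X Y : Type*} [Fintype X] [Fintype Y]
    (α : ℝ) (P : X → ℝ) (W : X → Y → ℝ) : EReal :=
  ⨅ Q ∈ {Q : Y → ℝ | IsPMF Q}, cDiv α W Q P

/-!
Let `T` be the Augustin operator applied to `Q*` and `S_x(Q) = ∑_y W(x)(y)^α Q(y)^(1-α)`.
Since `S_x(T) / S_x(Q*)` is the mean of `(T / Q*)^(1-α)` under the tilted distribution
`W_α^{Q*}(x)`, Jensen's inequality for `log` gives
`(1 - α) ∑_y W_α^{Q*}(x)(y) log (T y / Q* y) ≤ log (S_x(T) / S_x(Q*))`.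
Averaging over `P`, the left side becomes `(1 - α) D(T ‖ Q*)` and the right side
`(1 - α) (D_α(W‖Q*|P) - D_α(W‖T|P)) ≤ 0` by minimality of `Q*`. So `D(T ‖ Q*) ≤ 0`, and the
equality case of Gibbs' inequality forces `T = Q*`.
-/

open Real Finset InformationTheory

theorem EReal.coe_finset_sum {ι : Type*} (s : Finset ι) (f : ι → ℝ) :
    ((∑ i ∈ s, f i : ℝ) : EReal) = ∑ i ∈ s, (f i : EReal) :=
  map_sum (⟨⟨((↑) : ℝ → EReal), EReal.coe_zero⟩, EReal.coe_add⟩ : ℝ →+ EReal) f s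

theorem Real.sum_mul_log_le_log_sum_mul {ι : Type*} (s : Finset ι) {w r : ι → ℝ}
    (hw : ∀ i ∈ s, 0 ≤ w i) (hw₁ : ∑ i ∈ s, w i = 1) (hr : ∀ i ∈ s, 0 < w i → 0 < r i) :
    ∑ i ∈ s, w i * log (r i) ≤ log (∑ i ∈ s, w i * r i) := by
  classical
  set t := s.filter (fun i => 0 < w i)
  have hsupp (f : ι → ℝ) : ∑ i ∈ t, w i * f i = ∑ i ∈ s, w i * f i :=
    sum_filter_of_ne fun i hi hwf => (hw i hi).lt_of_ne' (left_ne_zero_of_mul hwf)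
  have jensen := strictConcaveOn_log_Ioi.concaveOn.le_map_sum (t := t) (w := w) (p := r)
    (fun i hi => hw i (mem_filter.1 hi).1)
    (by rw [← hw₁]; simpa using hsupp fun _ => 1)
    (fun i hi => hr i (mem_filter.1 hi).1 (mem_filter.1 hi).2)
  simp only [smul_eq_mul] at jensen
  rwa [hsupp, hsupp] at jensen

theorem eq_of_sum_mul_log_div_nonpos {ι : Type*} [Fintype ι] {p q : ι → ℝ}
    (hq : ∀ i, 0 ≤ q i) (hp : ∀ i, 0 < p i) (hsum : ∑ i, q i = ∑ i, p i)
    (hkl : ∑ i, q i * log (q i / p i) ≤ 0) : q = p := by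
  have hratio (i : ι) : 0 ≤ q i / p i := div_nonneg (hq i) (hp i).le
  -- `q log (q/p) = p klFun (q/p) + (q - p)`, and the `q - p` terms sum to zero.
  have hterm (i : ι) : p i * klFun (q i / p i) = q i * log (q i / p i) - (q i - p i) := by
    rw [klFun_apply]; field_simp [(hp i).ne']; ring
  have hnonneg (i : ι) : 0 ≤ p i * klFun (q i / p i) :=
    mul_nonneg (hp i).le (klFun_nonneg (hratio i))
  have hzero : ∑ i, p i * klFun (q i / p i) = 0 := by
    refine le_antisymm ?_ (sum_nonneg fun i _ => hnonneg i)
    simpa only [hterm, sum_sub_distrib, hsum, sub_self, sub_zero] using hkl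
  funext i
  have hi := (sum_eq_zero_iff_of_nonneg fun i _ => hnonneg i).1 hzero i (mem_univ i)
  rw [mul_eq_zero, klFun_eq_zero_iff (hratio i), div_eq_one_iff_eq (hp i).ne'] at hi
  exact hi.resolve_left (hp i).ne'

theorem IsPMF.mixture {X Y : Type*} [Fintype X] [Fintype Y] {P : X → ℝ} {V : X → Y → ℝ}
    (hP : IsPMF P) (hV : ∀ x, IsPMF (V x)) : IsPMF fun y => ∑ x, P x * V x y := by
  refine ⟨fun y => sum_nonneg fun x _ => mul_nonneg (hP.1 x) ((hV x).1 y), ?_⟩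
  rw [sum_comm]
  simp only [← mul_sum, (hV _).2, mul_one, hP.2]

section Augustin

variable {X Y : Type*} [Fintype X] [Fintype Y]

noncomputable def tilted (α : ℝ) (W Q : Y → ℝ) : Y → ℝ :=
  fun y => W y ^ α * Q y ^ (1 - α) / rSum α W Q

noncomputable def augustinOp (α : ℝ) (P : X → ℝ) (W : X → Y → ℝ) (Q : Y → ℝ) : Y → ℝ :=
  fun y => ∑ x, P x * tilted α (W x) Q y

theorem rSum_pos {α : ℝ} {W Q : Y → ℝ} (hW : IsPMF W) (hQ : ∀ y, 0 ≤ Q y)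
    (hWQ : ∀ y, 0 < W y → 0 < Q y) : 0 < rSum α W Q := by
  obtain ⟨y, hy⟩ : ∃ y, 0 < W y := by
    by_contra! h
    have : ∑ y, W y = 0 := sum_eq_zero fun y _ => (h y).antisymm (hW.1 y)
    exact zero_ne_one (this.symm.trans hW.2)
  refine sum_pos' (fun y _ => mul_nonneg (rpow_nonneg (hW.1 y) _) (rpow_nonneg (hQ y) _))
    ⟨y, mem_univ y, mul_pos (rpow_pos_of_pos hy _) (rpow_pos_of_pos (hWQ y hy) _)⟩

theorem tilted_nonneg {α : ℝ} {W Q : Y → ℝ} (hW : ∀ y, 0 ≤ W y) (hQ : ∀ y, 0 ≤ Q y)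
    (y : Y) : 0 ≤ tilted α W Q y := by
  have hterm (y : Y) : 0 ≤ W y ^ α * Q y ^ (1 - α) :=
    mul_nonneg (rpow_nonneg (hW y) _) (rpow_nonneg (hQ y) _)
  exact div_nonneg (hterm y) (sum_nonneg fun y _ => hterm y)

theorem tilted_pos {α : ℝ} {W Q : Y → ℝ} {y : Y} (hWy : 0 < W y) (hQy : 0 < Q y)
    (hS : 0 < rSum α W Q) : 0 < tilted α W Q y :=
  div_pos (mul_pos (rpow_pos_of_pos hWy _) (rpow_pos_of_pos hQy _)) hS

theorem isPMF_tilted {α : ℝ} {W Q : Y → ℝ} (hW : ∀ y, 0 ≤ W y) (hQ : ∀ y, 0 ≤ Q y)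
    (hS : 0 < rSum α W Q) : IsPMF (tilted α W Q) :=
  ⟨tilted_nonneg hW hQ, by
    simp only [tilted]; rw [← sum_div]; exact div_self hS.ne'⟩

theorem rSum_div_rSum_eq_sum_tilted {α : ℝ} {W Q Q' : Y → ℝ} (hQ : ∀ y, 0 < Q y)
    (hQ' : ∀ y, 0 ≤ Q' y) (hS : rSum α W Q ≠ 0) :
    rSum α W Q' / rSum α W Q = ∑ y, tilted α W Q y * (Q' y / Q y) ^ (1 - α) := by
  rw [rSum, sum_div]
  refine sum_congr rfl fun y _ => ?_
  rw [tilted, div_rpow (hQ' y) (hQ y).le]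
  field_simp [(rpow_pos_of_pos (hQ y) (1 - α)).ne']

theorem mul_sum_tilted_mul_log_le {α : ℝ} {W Q Q' : Y → ℝ} (hW : ∀ y, 0 ≤ W y)
    (hQ : ∀ y, 0 < Q y) (hQ' : ∀ y, 0 ≤ Q' y) (hS : 0 < rSum α W Q)
    (hsupp : ∀ y, 0 < tilted α W Q y → 0 < Q' y) :
    (1 - α) * ∑ y, tilted α W Q y * log (Q' y / Q y) ≤ log (rSum α W Q' / rSum α W Q) := by
  have hV := isPMF_tilted hW (fun y => (hQ y).le) hS
  rw [rSum_div_rSum_eq_sum_tilted hQ hQ' hS.ne', mul_sum]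
  refine le_trans (le_of_eq (sum_congr rfl fun y _ => ?_)) (Real.sum_mul_log_le_log_sum_mul _
    (fun y _ => hV.1 y) hV.2 fun y _ hy => rpow_pos_of_pos (div_pos (hsupp y hy) (hQ y)) _)
  rcases (hV.1 y).eq_or_lt with hy | hy
  · simp [← hy]
  · rw [log_rpow (div_pos (hsupp y hy) (hQ y))]; ring

theorem isPMF_augustinOp {α : ℝ} {P : X → ℝ} {W : X → Y → ℝ} {Q : Y → ℝ} (hP : IsPMF P)
    (hW : ∀ x y, 0 ≤ W x y) (hQ : ∀ y, 0 ≤ Q y) (hS : ∀ x, 0 < rSum α (W x) Q) :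
    IsPMF (augustinOp α P W Q) :=
  hP.mixture fun x => isPMF_tilted (hW x) hQ (hS x)

theorem augustinOp_pos {α : ℝ} {P : X → ℝ} {W : X → Y → ℝ} {Q : Y → ℝ} {x : X} {y : Y}
    (hP : ∀ x, 0 < P x) (hW : ∀ x y, 0 ≤ W x y) (hQ : ∀ y, 0 ≤ Q y)
    (hxy : 0 < tilted α (W x) Q y) :
    0 < augustinOp α P W Q y :=
  (mul_pos (hP x) hxy).trans_le <| single_le_sum
    (fun x _ => mul_nonneg (hP x).le (tilted_nonneg (hW x) hQ y)) (mem_univ x)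

theorem mul_sum_augustinOp_mul_log_le {α : ℝ} {P : X → ℝ} {W : X → Y → ℝ} {Q : Y → ℝ}
    (hP : ∀ x, 0 < P x) (hW : ∀ x y, 0 ≤ W x y) (hQ : ∀ y, 0 < Q y)
    (hS : ∀ x, 0 < rSum α (W x) Q) :
    (1 - α) * ∑ y, augustinOp α P W Q y * log (augustinOp α P W Q y / Q y)
      ≤ ∑ x, P x * log (rSum α (W x) (augustinOp α P W Q) / rSum α (W x) Q) := by
  have hT (y : Y) : 0 ≤ augustinOp α P W Q y := sum_nonneg fun x _ =>
    mul_nonneg (hP x).le (tilted_nonneg (hW x) (fun y => (hQ y).le) y)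
  calc (1 - α) * ∑ y, augustinOp α P W Q y * log (augustinOp α P W Q y / Q y)
      = ∑ x, P x * ((1 - α) *
          ∑ y, tilted α (W x) Q y * log (augustinOp α P W Q y / Q y)) := by
        simp only [augustinOp, sum_mul, mul_sum]
        rw [sum_comm]
        exact sum_congr rfl fun x _ => sum_congr rfl fun y _ => by ring
    _ ≤ ∑ x, P x * log (rSum α (W x) (augustinOp α P W Q) / rSum α (W x) Q) :=
        sum_le_sum fun x _ => mul_le_mul_of_nonneg_left
          (mul_sum_tilted_mul_log_le (hW x) hQ hT (hS x)
            fun y hy => augustinOp_pos hP hW (fun y => (hQ y).le) hy) (hP x).le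

theorem cDiv_eq_coe {α : ℝ} (hα : α ≠ 1) {W : X → Y → ℝ} {Q : Y → ℝ} (P : X → ℝ)
    (hS : ∀ x, rSum α (W x) Q ≠ 0) :
    cDiv α W Q P = ((1 / (α - 1) * ∑ x, P x * log (rSum α (W x) Q) : ℝ) : EReal) := by
  rw [cDiv, mul_sum, EReal.coe_finset_sum]
  refine sum_congr rfl fun x _ => ?_
  rw [dA, if_neg hα, rDiv, if_neg (hS x), ← EReal.coe_mul]
  ring_nf

theorem cDiv_le_cDiv_iff {α : ℝ} (hα : α < 1) {W : X → Y → ℝ} {Q Q' : Y → ℝ} (P : X → ℝ)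
    (hS : ∀ x, 0 < rSum α (W x) Q) (hS' : ∀ x, 0 < rSum α (W x) Q') :
    cDiv α W Q P ≤ cDiv α W Q' P ↔
      ∑ x, P x * log (rSum α (W x) Q') ≤ ∑ x, P x * log (rSum α (W x) Q) := by
  rw [cDiv_eq_coe hα.ne P fun x => (hS x).ne', cDiv_eq_coe hα.ne P fun x => (hS' x).ne',
    EReal.coe_le_coe_iff, mul_le_mul_left_of_neg (by simpa using hα)]

end Augustin

theorem augustin_mean_fixed_point_general {X Y : Type*} [Fintype X] [Fintype Y]
    (α : ℝ) (hα : α ∈ Set.Ioo (0 : ℝ) 1)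
    (W : X → Y → ℝ) (hW : ∀ x, IsPMF (W x))
    (P : X → ℝ) (hP : IsPMF P) (hPpos : ∀ x, 0 < P x)
    (Qstar : Y → ℝ) (hQstar : IsPMF Qstar) (hQpos : ∀ y, 0 < Qstar y)
    (hmin : ∀ Q : Y → ℝ, IsPMF Q → cDiv α W Qstar P ≤ cDiv α W Q P) :
    (fun y => ∑ x, P x *
        (W x y ^ α * Qstar y ^ (1 - α) / ∑ y', W x y' ^ α * Qstar y' ^ (1 - α)))
      = Qstar := by
  change augustinOp α P W Qstar = Qstar
  set T := augustinOp α P W Qstar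
  have hW₀ (x : X) (y : Y) : 0 ≤ W x y := (hW x).1 y
  have hS (x : X) : 0 < rSum α (W x) Qstar :=
    rSum_pos (hW x) (fun y => (hQpos y).le) fun y _ => hQpos y
  have hT : IsPMF T := isPMF_augustinOp hP hW₀ (fun y => (hQpos y).le) hS
  have hST (x : X) : 0 < rSum α (W x) T := rSum_pos (hW x) hT.1 fun y hy =>
    augustinOp_pos hPpos hW₀ (fun y => (hQpos y).le) (tilted_pos hy (hQpos y) (hS x))
  have hlog : ∑ x, P x * log (rSum α (W x) T / rSum α (W x) Qstar) ≤ 0 := by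
    have := (cDiv_le_cDiv_iff hα.2 P hS hST).1 (hmin T hT)
    simp only [log_div (hST _).ne' (hS _).ne', mul_sub, sum_sub_distrib]
    linarith
  have hkl : ∑ y, T y * log (T y / Qstar y) ≤ 0 :=
    nonpos_of_mul_nonpos_right ((mul_sum_augustinOp_mul_log_le hPpos hW₀ hQpos hS).trans hlog)
      (sub_pos.2 hα.2)
  exact eq_of_sum_mul_log_div_nonpos hT.1 hQpos (hT.2.trans hQstar.2.symm) hkl

/-- the Augustin mean is a fixed point of the Augustin operator. -/
theorem augustin_mean_fixed_point {X Y : Type*} [Fintype X] [Fintype Y]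
    [Nonempty X] [Nonempty Y]
    (α : ℝ) (hα : α ∈ Set.Ioo (0 : ℝ) 1)
    (W : X → Y → ℝ) (hW : ∀ x, IsPMF (W x))
    (P : X → ℝ) (hP : IsPMF P) (hPpos : ∀ x, 0 < P x)
    (Qstar : Y → ℝ) (hQstar : IsPMF Qstar) (hQpos : ∀ y, 0 < Qstar y)
    (hmin : ∀ Q : Y → ℝ, IsPMF Q → cDiv α W Qstar P ≤ cDiv α W Q P) :
    (fun y => ∑ x, P x *
        (W x y ^ α * Qstar y ^ (1 - α) / ∑ y', W x y' ^ α * Qstar y' ^ (1 - α)))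
      = Qstar :=
  augustin_mean_fixed_point_general α hα W hW P hP hPpos Qstar hQstar hQpos hmin
end

section
/- Let W : X → P(Y) with X, Y finite, ρ : X → ℝ≥0^ℓ, λ ∈ ℝ≥0^ℓ, α ∈ (0,1), and P a probability mass function on X. Define m(y) := [ Σ_x P(x) e^{(1−α)λ·ρ(x)} W(x)(y)^α ]^{1/α} and the R-G mean Q^{G}_{α,P}(y) := m(y)/Σ_{y'} m(y'). Then for every probability mass function Q on Y: D_α( P∘(W e^{((1−α)/α)λ·ρ}) ‖ P⊗Q ) = D_α( P∘(W e^{((1−α)/α)λ·ρ}) ‖ P⊗Q^{G}_{α,P} ) + D_α( Q^{G}_{α,P} ‖ Q ). In particular Q^{G}_{α,P} is the unique minimizer defining the R-G information. -/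
open scoped BigOperators

/-! Since `m y ^ α = ∑ x, P x e^{(1-α) λ·ρ x} W x y ^ α`, the Rényi power sum of the tilted joint
measure against `P ⊗ Q` collapses to `A(Q) = ∑ y, m y ^ α Q y ^ (1 - α)`. With `S = ∑ y, m y`,
the power sum against `P ⊗ Q_G` is `S ^ α` and that of `Q_G` against `Q` is `A(Q) / S ^ α`, so
the logarithms add up to the Pythagorean identity. Weighted AM–GM gives
`∑ y, Q_G y ^ α Q y ^ (1 - α) ≤ 1` with equality only if `Q = Q_G`, i.e. `D_α(Q_G‖Q) ≥ 0` with
equality only at `Q_G`, which yields minimality and uniqueness. -/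

open Finset

lemma Real.rpow_mul_rpow_one_sub {x : ℝ} (hx : 0 ≤ x) (α : ℝ) : x ^ α * x ^ (1 - α) = x := by
  rw [← Real.rpow_add' hx (by norm_num), add_sub_cancel, Real.rpow_one]

lemma isPMF_div_sum {Y : Type*} [Fintype Y] {m : Y → ℝ} (hm : ∀ y, 0 ≤ m y)
    (hS : 0 < ∑ y, m y) : IsPMF fun y => m y / ∑ y', m y' :=
  ⟨fun y => div_nonneg (hm y) hS.le, by rw [← sum_div, div_self hS.ne']⟩

lemma IsPMF.sum_mix {Y : Type*} [Fintype Y] {P Q : Y → ℝ} (hP : IsPMF P) (hQ : IsPMF Q)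
    (α : ℝ) : ∑ y, (α * P y + (1 - α) * Q y) = 1 := by
  rw [sum_add_distrib, ← mul_sum, ← mul_sum, hP.2, hQ.2]
  ring

section RenyiDivergence

variable {Y : Type*} [Fintype Y] {α : ℝ}

lemma rDiv_of_rSum_ne_zero {W Q : Y → ℝ} (h : rSum α W Q ≠ 0) :
    rDiv α W Q = ((1 / (α - 1) * Real.log (rSum α W Q) : ℝ) : EReal) :=
  if_neg h

lemma rSum_nonneg {W Q : Y → ℝ} (hW : ∀ y, 0 ≤ W y) (hQ : ∀ y, 0 ≤ Q y) : 0 ≤ rSum α W Q :=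
  sum_nonneg fun y _ => mul_nonneg (Real.rpow_nonneg (hW y) α) (Real.rpow_nonneg (hQ y) _)

lemma rSum_self {m : Y → ℝ} (hm : ∀ y, 0 ≤ m y) : rSum α m m = ∑ y, m y :=
  sum_congr rfl fun y _ => Real.rpow_mul_rpow_one_sub (hm y) α

lemma rSum_div_left {m : Y → ℝ} (hm : ∀ y, 0 ≤ m y) {c : ℝ} (hc : 0 ≤ c) (Q : Y → ℝ) :
    rSum α (fun y => m y / c) Q = rSum α m Q / c ^ α := by
  rw [rSum, rSum, sum_div]
  refine sum_congr rfl fun y _ => ?_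
  rw [Real.div_rpow (hm y) hc]
  ring

lemma rSum_div_right (m : Y → ℝ) {Q : Y → ℝ} (hQ : ∀ y, 0 ≤ Q y) {c : ℝ} (hc : 0 ≤ c) :
    rSum α m (fun y => Q y / c) = rSum α m Q / c ^ (1 - α) := by
  rw [rSum, rSum, sum_div]
  refine sum_congr rfl fun y _ => ?_
  rw [Real.div_rpow (hQ y) hc]
  ring

lemma rSum_le_one (hα0 : 0 ≤ α) (hα1 : α ≤ 1) {P Q : Y → ℝ} (hP : IsPMF P) (hQ : IsPMF Q) :
    rSum α P Q ≤ 1 :=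
  calc rSum α P Q ≤ ∑ y, (α * P y + (1 - α) * Q y) := sum_le_sum fun y _ =>
        Real.geom_mean_le_arith_mean2_weighted hα0 (sub_nonneg.2 hα1) (hP.1 y) (hQ.1 y) (by ring)
    _ = 1 := hP.sum_mix hQ α

lemma eq_of_rSum_eq_one (hα : α ∈ Set.Ioo (0 : ℝ) 1) {P Q : Y → ℝ} (hP : IsPMF P)
    (hQ : IsPMF Q) (h : rSum α P Q = 1) : P = Q := by
  have hamgm : ∀ y ∈ univ, P y ^ α * Q y ^ (1 - α) ≤ α * P y + (1 - α) * Q y := fun y _ =>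
    Real.geom_mean_le_arith_mean2_weighted hα.1.le (sub_nonneg.2 hα.2.le) (hP.1 y) (hQ.1 y)
      (by ring)
  have hsum : ∑ y, P y ^ α * Q y ^ (1 - α) = ∑ y, (α * P y + (1 - α) * Q y) :=
    h.trans (hP.sum_mix hQ α).symm
  funext y
  exact (Real.geom_mean_eq_arith_mean2_weighted_iff_of_pos hα.1 (sub_pos.2 hα.2) (hP.1 y)
    (hQ.1 y) (by ring)).1 ((sum_eq_sum_iff_of_le hamgm).1 hsum y (mem_univ y))

lemma rDiv_nonneg (hα0 : 0 ≤ α) (hα1 : α ≤ 1) {P Q : Y → ℝ} (hP : IsPMF P) (hQ : IsPMF Q) :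
    0 ≤ rDiv α P Q := by
  unfold rDiv
  split_ifs
  · exact le_top
  · exact EReal.coe_nonneg.2 <| mul_nonneg_of_nonpos_of_nonpos
      (one_div_nonpos.2 (sub_nonpos.2 hα1))
      (Real.log_nonpos (rSum_nonneg hP.1 hQ.1) (rSum_le_one hα0 hα1 hP hQ))

lemma eq_of_rDiv_eq_zero (hα : α ∈ Set.Ioo (0 : ℝ) 1) {P Q : Y → ℝ} (hP : IsPMF P)
    (hQ : IsPMF Q) (h : rDiv α P Q = 0) : P = Q := by
  have hne : rSum α P Q ≠ 0 := fun h0 => by simp [rDiv, h0] at h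
  rw [rDiv_of_rSum_ne_zero hne, EReal.coe_eq_zero, mul_eq_zero, one_div, inv_eq_zero,
    sub_eq_zero] at h
  refine eq_of_rSum_eq_one hα hP hQ (Real.eq_one_of_pos_of_log_eq_zero ?_ ?_)
  · exact (rSum_nonneg hP.1 hQ.1).lt_of_ne' hne
  · exact h.resolve_left hα.2.ne

lemma rDiv_eq_add_of_rSum_eq_mul {Y₂ Y₃ : Type*} [Fintype Y₂] [Fintype Y₃]
    {W₁ Q₁ : Y → ℝ} {W₂ Q₂ : Y₂ → ℝ} {W₃ Q₃ : Y₃ → ℝ}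
    (h : rSum α W₁ Q₁ = rSum α W₂ Q₂ * rSum α W₃ Q₃) (h₂ : 0 < rSum α W₂ Q₂) :
    rDiv α W₁ Q₁ = rDiv α W₂ Q₂ + rDiv α W₃ Q₃ := by
  rw [rDiv_of_rSum_ne_zero h₂.ne']
  by_cases h₃ : rSum α W₃ Q₃ = 0
  · simp only [rDiv, h, h₃, mul_zero, if_true, EReal.coe_add_top]
  · rw [rDiv_of_rSum_ne_zero h₃, rDiv_of_rSum_ne_zero (h ▸ mul_ne_zero h₂.ne' h₃), h,
      Real.log_mul h₂.ne' h₃, ← EReal.coe_add, mul_add]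

lemma rSum_normalize_self {m : Y → ℝ} (hm : ∀ y, 0 ≤ m y) (hS : 0 < ∑ y, m y) :
    rSum α m (fun y => m y / ∑ y', m y') = (∑ y, m y) ^ α := by
  rw [rSum_div_right m hm hS.le, rSum_self hm, Real.rpow_sub hS, Real.rpow_one,
    div_div_cancel₀ hS.ne']

lemma rSum_eq_mul_rSum_normalize {m : Y → ℝ} (hm : ∀ y, 0 ≤ m y) (hS : 0 < ∑ y, m y)
    (Q : Y → ℝ) :
    rSum α m Q = rSum α m (fun y => m y / ∑ y', m y') * rSum α (fun y => m y / ∑ y', m y') Q := by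
  rw [rSum_normalize_self hm hS, rSum_div_left hm hS.le,
    mul_div_cancel₀ _ (Real.rpow_pos_of_pos hS α).ne']

end RenyiDivergence

section RgMean

variable {X Y : Type*} [Fintype X] {α : ℝ} {P : X → ℝ} {W : X → Y → ℝ}

noncomputable def unnormalizedRgMean (α : ℝ) (P : X → ℝ) (W : X → Y → ℝ) (t : X → ℝ) (y : Y) : ℝ :=
  (∑ x, P x * Real.exp ((1 - α) * t x) * W x y ^ α) ^ (1 / α)

lemma unnormalizedRgMean_nonneg (hP : ∀ x, 0 ≤ P x) (hW : ∀ x y, 0 ≤ W x y) (t : X → ℝ) (y : Y) :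
    0 ≤ unnormalizedRgMean α P W t y :=
  Real.rpow_nonneg (sum_nonneg fun x _ => by have := hP x; have := hW x y; positivity) _

lemma unnormalizedRgMean_rpow (hα : α ≠ 0) (hP : ∀ x, 0 ≤ P x) (hW : ∀ x y, 0 ≤ W x y) (t : X → ℝ)
    (y : Y) :
    unnormalizedRgMean α P W t y ^ α = ∑ x, P x * Real.exp ((1 - α) * t x) * W x y ^ α := by
  rw [unnormalizedRgMean, one_div]
  exact Real.rpow_inv_rpow (sum_nonneg fun x _ => by have := hP x; have := hW x y; positivity) hα

lemma rSum_mul_fst_prod [Fintype Y] (α : ℝ) {V : X → Y → ℝ} {Q : Y → ℝ} (hP : ∀ x, 0 ≤ P x)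
    (hV : ∀ x y, 0 ≤ V x y) (hQ : ∀ y, 0 ≤ Q y) :
    rSum α (fun p : X × Y => P p.1 * V p.1 p.2) (fun p => P p.1 * Q p.2) =
      ∑ y, (∑ x, P x * V x y ^ α) * Q y ^ (1 - α) := by
  rw [rSum, Fintype.sum_prod_type, sum_comm]
  refine sum_congr rfl fun y _ => ?_
  rw [sum_mul]
  refine sum_congr rfl fun x _ => ?_
  rw [Real.mul_rpow (hP x) (hV x y), Real.mul_rpow (hP x) (hQ y)]
  linear_combination (V x y ^ α * Q y ^ (1 - α)) * Real.rpow_mul_rpow_one_sub (hP x) α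

lemma rSum_tilted_prod [Fintype Y] (hα : α ≠ 0) (hP : ∀ x, 0 ≤ P x) (hW : ∀ x y, 0 ≤ W x y)
    (t : X → ℝ) {Q : Y → ℝ} (hQ : ∀ y, 0 ≤ Q y) :
    rSum α (fun p : X × Y => P p.1 * W p.1 p.2 * Real.exp ((1 - α) / α * t p.1))
      (fun p => P p.1 * Q p.2) = rSum α (unnormalizedRgMean α P W t) Q := by
  have htilt : ∀ x y, (W x y * Real.exp ((1 - α) / α * t x)) ^ α =
      Real.exp ((1 - α) * t x) * W x y ^ α := fun x y => by
    rw [Real.mul_rpow (hW x y) (Real.exp_pos _).le, ← Real.exp_mul, mul_right_comm,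
      div_mul_cancel₀ _ hα, mul_comm]
  simp_rw [mul_assoc (P _)]
  rw [rSum_mul_fst_prod α (V := fun x y => W x y * Real.exp ((1 - α) / α * t x)) hP
    (fun x y => mul_nonneg (hW x y) (Real.exp_pos _).le) hQ]
  simp_rw [rSum, unnormalizedRgMean_rpow hα hP hW, htilt, mul_assoc]

end RgMean

theorem rg_mean_identity_general {X Y : Type*} [Fintype X] [Fintype Y]
    {l : ℕ}
    (α : ℝ) (hα : α ∈ Set.Ioo (0 : ℝ) 1)
    (W : X → Y → ℝ) (hW : ∀ x, IsPMF (W x))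
    (ρ : X → Fin l → ℝ)
    (lam : Fin l → ℝ)
    (P : X → ℝ) (hP : IsPMF P)
    (m : Y → ℝ)
    (hm : m = fun y =>
      (∑ x, P x * Real.exp ((1 - α) * ∑ i, lam i * ρ x i) * W x y ^ α) ^ (1 / α))
    (hmpos : 0 < ∑ y, m y)
    (QG : Y → ℝ) (hQG : QG = fun y => m y / ∑ y', m y')
    (μ : X × Y → ℝ)
    (hμ : μ = fun p =>
      P p.1 * W p.1 p.2 * Real.exp ((1 - α) / α * ∑ i, lam i * ρ p.1 i)) :
    (∀ Q : Y → ℝ, IsPMF Q →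
        rDiv α μ (fun p : X × Y => P p.1 * Q p.2) =
          rDiv α μ (fun p : X × Y => P p.1 * QG p.2) + rDiv α QG Q) ∧
      (∀ Q : Y → ℝ, IsPMF Q →
        rDiv α μ (fun p : X × Y => P p.1 * QG p.2) ≤
          rDiv α μ (fun p : X × Y => P p.1 * Q p.2)) ∧
      (∀ Q : Y → ℝ, IsPMF Q →
        rDiv α μ (fun p : X × Y => P p.1 * Q p.2) =
          rDiv α μ (fun p : X × Y => P p.1 * QG p.2) → Q = QG) := by
  have hm' : m = unnormalizedRgMean α P W (fun x => ∑ i, lam i * ρ x i) := hm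
  have hm0 : ∀ y, 0 ≤ m y := hm' ▸ unnormalizedRgMean_nonneg hP.1 (fun x => (hW x).1) _
  have hQG_pmf : IsPMF QG := hQG ▸ isPMF_div_sum hm0 hmpos
  have hμQ : ∀ Q : Y → ℝ, IsPMF Q →
      rSum α μ (fun p : X × Y => P p.1 * Q p.2) = rSum α m Q := fun Q hQ => by
    rw [hμ, hm']
    exact rSum_tilted_prod hα.1.ne' hP.1 (fun x => (hW x).1)
      (fun x => ∑ i, lam i * ρ x i) hQ.1
  have hpos : 0 < rSum α μ (fun p : X × Y => P p.1 * QG p.2) := by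
    rw [hμQ QG hQG_pmf, hQG, rSum_normalize_self hm0 hmpos]
    exact Real.rpow_pos_of_pos hmpos α
  have hpyth : ∀ Q : Y → ℝ, IsPMF Q → rDiv α μ (fun p : X × Y => P p.1 * Q p.2) =
      rDiv α μ (fun p : X × Y => P p.1 * QG p.2) + rDiv α QG Q := fun Q hQ =>
    rDiv_eq_add_of_rSum_eq_mul (by
      rw [hμQ Q hQ, hμQ QG hQG_pmf, hQG]
      exact rSum_eq_mul_rSum_normalize hm0 hmpos Q) hpos
  refine ⟨hpyth, fun Q hQ => ?_, fun Q hQ h => ?_⟩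
  · rw [hpyth Q hQ]
    exact le_add_of_nonneg_right (rDiv_nonneg hα.1.le hα.2.le hQG_pmf hQ)
  · rw [hpyth Q hQ, rDiv_of_rSum_ne_zero hpos.ne'] at h
    refine (eq_of_rDiv_eq_zero hα hQG_pmf hQ ?_).symm
    rw [← EReal.add_sub_cancel_left (a := rDiv α QG Q), h, ← EReal.coe_sub, sub_self,
      EReal.coe_zero]

/-- the Rényi–Gallager mean satisfies the Pythagorean identity and is the
unique minimizer defining the Rényi–Gallager information. -/
theorem rg_mean_identity {X Y : Type*} [Fintype X] [Fintype Y]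
    [Nonempty X] [Nonempty Y] {l : ℕ} (hl : 0 < l)
    (α : ℝ) (hα : α ∈ Set.Ioo (0 : ℝ) 1)
    (W : X → Y → ℝ) (hW : ∀ x, IsPMF (W x))
    (ρ : X → Fin l → ℝ) (hρ : ∀ x i, 0 ≤ ρ x i)
    (lam : Fin l → ℝ) (hlam : ∀ i, 0 ≤ lam i)
    (P : X → ℝ) (hP : IsPMF P)
    (m : Y → ℝ)
    (hm : m = fun y =>
      (∑ x, P x * Real.exp ((1 - α) * ∑ i, lam i * ρ x i) * W x y ^ α) ^ (1 / α))
    (hmpos : 0 < ∑ y, m y)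
    (QG : Y → ℝ) (hQG : QG = fun y => m y / ∑ y', m y')
    (μ : X × Y → ℝ)
    (hμ : μ = fun p =>
      P p.1 * W p.1 p.2 * Real.exp ((1 - α) / α * ∑ i, lam i * ρ p.1 i)) :
    (∀ Q : Y → ℝ, IsPMF Q →
        rDiv α μ (fun p : X × Y => P p.1 * Q p.2) =
          rDiv α μ (fun p : X × Y => P p.1 * QG p.2) + rDiv α QG Q) ∧
      (∀ Q : Y → ℝ, IsPMF Q →
        rDiv α μ (fun p : X × Y => P p.1 * QG p.2) ≤
          rDiv α μ (fun p : X × Y => P p.1 * Q p.2)) ∧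
      (∀ Q : Y → ℝ, IsPMF Q →
        rDiv α μ (fun p : X × Y => P p.1 * Q p.2) =
          rDiv α μ (fun p : X × Y => P p.1 * QG p.2) → Q = QG) :=
  rg_mean_identity_general α hα W hW ρ lam P hP m hm hmpos QG hQG μ hμ
end
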